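/- arXiv:1808.08468 — 2 statements merged into one kernel-verified Lean document; each statement's English description precedes it below -/
import Mathlib

section
/- Let H be a real inner product space, let K ⊆ H be a set, and let u₁, u₂ ∈ K. Assume that for every v ∈ K one has (1/2)‖v‖² − (1/2)‖u₁‖² ≥ ⟪u₂, v − u₁⟫. Then u₁ = u₂. -/
open scoped RealInnerProductSpace

theorem inner_sub_sub_half_norm_sq_sub_half_norm_sq {H : Type*} [NormedAddCommGroup H]
    [InnerProductSpace ℝ H] (u v : H) :
    ⟪v, v - u⟫ - ((1 / 2 : ℝ) * ‖v‖ ^ 2 - (1 / 2 : ℝ) * ‖u‖ ^ 2) = (1 / 2 : ℝ) * ‖u - v‖ ^ 2 := by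
  rw [inner_sub_right, real_inner_self_eq_norm_sq, norm_sub_sq_real, real_inner_comm]
  ring

theorem eq_of_inner_sub_le_half_norm_sq_sub_half_norm_sq {H : Type*} [NormedAddCommGroup H]
    [InnerProductSpace ℝ H] {u v : H}
    (h : ⟪v, v - u⟫ ≤ (1 / 2 : ℝ) * ‖v‖ ^ 2 - (1 / 2 : ℝ) * ‖u‖ ^ 2) : u = v := by
  have hsq : ‖u - v‖ ^ 2 ≤ 0 := by
    linarith [inner_sub_sub_half_norm_sq_sub_half_norm_sq u v]
  exact norm_sub_eq_zero_iff.mp (pow_eq_zero_iff two_ne_zero |>.mp (le_antisymm hsq (sq_nonneg _)))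

theorem critical_point_eq_representative_general
    {H : Type*} [NormedAddCommGroup H] [InnerProductSpace ℝ H]
    (K : Set H) (u₁ u₂ : H) (hu₂ : u₂ ∈ K)
    (h : ∀ v ∈ K, (1 / 2 : ℝ) * ‖v‖ ^ 2 - (1 / 2 : ℝ) * ‖u₁‖ ^ 2 ≥
      (inner ℝ u₂ (v - u₁) : ℝ)) :
    u₁ = u₂ :=
  eq_of_inner_sub_le_half_norm_sq_sub_half_norm_sq (h u₂ hu₂)

/-- Abstract Hilbert-space core of Theorem 3.1: if `u₁, u₂ ∈ K` and
`(1/2)‖v‖² - (1/2)‖u₁‖² ≥ ⟪u₂, v - u₁⟫` for all `v ∈ K`, then `u₁ = u₂`. -/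
theorem critical_point_eq_representative
    {H : Type*} [NormedAddCommGroup H] [InnerProductSpace ℝ H]
    (K : Set H) (u₁ u₂ : H) (hu₁ : u₁ ∈ K) (hu₂ : u₂ ∈ K)
    (h : ∀ v ∈ K, (1 / 2 : ℝ) * ‖v‖ ^ 2 - (1 / 2 : ℝ) * ‖u₁‖ ^ 2 ≥
      (inner ℝ u₂ (v - u₁) : ℝ)) :
    u₁ = u₂ :=
  critical_point_eq_representative_general K u₁ u₂ hu₂ h
end

section
/- Let H be a real Hilbert space, let K ⊆ H be a convex set, and let u₁ ∈ K be a minimizer over K of the functional I(u) = (1/2)‖u‖² − φ(u), where φ : H → ℝ is Fréchet differentiable at u₁ with derivative Dφ(u₁) ∈ H'. Suppose there exists u₂ ∈ K such that ⟪u₂, w⟫ = ⟨Dφ(u₁), w⟩ for all w ∈ H. Then u₁ = u₂, and consequently u₁ satisfies ⟪u₁, w⟫ = ⟨Dφ(u₁), w⟩ for all w ∈ H, i.e. u₁ is a critical point of the unconstrained functional I on all of H. -/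
/-!
The first-order condition for a minimizer `u₁` of `I = ½‖·‖² - φ` over a convex set `K` is the
variational inequality `⟪u₁, v - u₁⟫ ≥ Dφ(u₁) (v - u₁)` for `v ∈ K`. When `Dφ(u₁) = ⟪u₂, ·⟫`
with `u₂ ∈ K`, taking `v = u₂` gives `-‖u₂ - u₁‖² ≥ 0`, so `u₁ = u₂`.
-/

open scoped RealInnerProductSpace

theorem IsMinOn.hasFDerivAt_sub_nonneg_of_convex {E : Type*} [NormedAddCommGroup E]
    [NormedSpace ℝ E] {f : E → ℝ} {f' : E →L[ℝ] ℝ} {K : Set E} {a b : E}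
    (hmin : IsMinOn f K a) (hf : HasFDerivAt f f' a) (hK : Convex ℝ K) (ha : a ∈ K)
    (hb : b ∈ K) : 0 ≤ f' (b - a) :=
  hmin.localize.hasFDerivWithinAt_nonneg hf.hasFDerivWithinAt
    (sub_mem_posTangentConeAt_of_segment_subset (hK.segment_subset ha hb))

section InnerProductSpace

variable {H : Type*} [NormedAddCommGroup H] [InnerProductSpace ℝ H]

theorem HasFDerivAt.half_norm_sq_sub {φ : H → ℝ} {φ' : H →L[ℝ] ℝ} {u : H}
    (hφ : HasFDerivAt φ φ' u) :
    HasFDerivAt (fun v : H => (1 / 2 : ℝ) * ‖v‖ ^ 2 - φ v) (innerSL ℝ u - φ') u := by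
  have hnorm : HasFDerivAt (fun v : H => ‖v‖ ^ 2) (2 • innerSL ℝ u) u :=
    (hasStrictFDerivAt_norm_sq u).hasFDerivAt
  refine ((hnorm.const_mul (1 / 2 : ℝ)).sub hφ).congr_fderiv ?_
  rw [two_smul, smul_add, ← add_smul]
  norm_num

theorem eq_of_inner_sub_sub_nonneg {u v : H} (h : 0 ≤ ⟪u - v, v - u⟫) : u = v := by
  rw [← neg_sub v u, inner_neg_left, neg_nonneg, real_inner_self_nonpos, sub_eq_zero] at h
  exact h.symm

end InnerProductSpace

theorem constrained_min_is_unconstrained_critical_point_general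
    {H : Type*} [NormedAddCommGroup H] [InnerProductSpace ℝ H]
    (K : Set H) (hK : Convex ℝ K) (φ : H → ℝ) (u₁ : H) (hu₁ : u₁ ∈ K)
    (Dφu₁ : H →L[ℝ] ℝ) (hφ : HasFDerivAt φ Dφu₁ u₁)
    (hmin : ∀ v ∈ K,
      (1 / 2 : ℝ) * ‖u₁‖ ^ 2 - φ u₁ ≤ (1 / 2 : ℝ) * ‖v‖ ^ 2 - φ v)
    (u₂ : H) (hu₂ : u₂ ∈ K) (hrep : ∀ w : H, (inner ℝ u₂ w : ℝ) = Dφu₁ w) :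
    u₁ = u₂ ∧ ∀ w : H, (inner ℝ u₁ w : ℝ) = Dφu₁ w := by
  have hvar : 0 ≤ (innerSL ℝ u₁ - Dφu₁) (u₂ - u₁) :=
    (isMinOn_iff.mpr hmin).hasFDerivAt_sub_nonneg_of_convex hφ.half_norm_sq_sub hK hu₁ hu₂
  rw [sub_apply, innerSL_apply_apply, ← hrep, ← inner_sub_left] at hvar
  have heq : u₁ = u₂ := eq_of_inner_sub_sub_nonneg hvar
  exact ⟨heq, heq ▸ hrep⟩

/-- Full abstract variational scheme (Lemma 2.4 + Theorem 3.1): if `u₁`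
minimizes `I(u) = (1/2)‖u‖² - φ(u)` over a convex set `K`, with `φ` Fréchet
differentiable at `u₁`, and the Riesz representative `u₂` of `Dφ(u₁)` lies in
`K`, then `u₁ = u₂` and `u₁` is an unconstrained critical point of `I`. -/
theorem constrained_min_is_unconstrained_critical_point
    {H : Type*} [NormedAddCommGroup H] [InnerProductSpace ℝ H] [CompleteSpace H]
    (K : Set H) (hK : Convex ℝ K) (φ : H → ℝ) (u₁ : H) (hu₁ : u₁ ∈ K)
    (Dφu₁ : H →L[ℝ] ℝ) (hφ : HasFDerivAt φ Dφu₁ u₁)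
    (hmin : ∀ v ∈ K,
      (1 / 2 : ℝ) * ‖u₁‖ ^ 2 - φ u₁ ≤ (1 / 2 : ℝ) * ‖v‖ ^ 2 - φ v)
    (u₂ : H) (hu₂ : u₂ ∈ K) (hrep : ∀ w : H, (inner ℝ u₂ w : ℝ) = Dφu₁ w) :
    u₁ = u₂ ∧ ∀ w : H, (inner ℝ u₁ w : ℝ) = Dφu₁ w :=
  constrained_min_is_unconstrained_critical_point_general K hK φ u₁ hu₁ Dφu₁ hφ hmin u₂ hu₂ hrep
end
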